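/- Let Y be a linear threshold unit with n binary inputs and threshold k (1 ≤ k ≤ n), and let v ∈ {0,1}^n be an actual input state with Σ_i v_i < k (so the actual outcome is Y = 0). Then the actual-cause candidate set x*(0) of the occurrence {Y = 0} is exactly the set of restrictions v|S with |S| = n − k + 1 and v_i = 0 for every i ∈ S. That is, an LTU in the off state behaves like an LTU with the roles of 0 and 1 reversed and threshold n − k + 1. -/

import Mathlib

open Finset

/-- Number of inputs in state `1` (true). -/
def ones {n : ℕ} (u : Fin n → Bool) : ℕ := (univ.filter fun i => u i = true).card

/-- Linear threshold unit with threshold `k`: outputs `1` iff at least `k` inputs are `1`. -/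
def LTU {n : ℕ} (k : ℕ) (u : Fin n → Bool) : Bool := decide (k ≤ ones u)

/-- Effect probability `π(y | v|S) = 2^{-(n-|S|)} · #{u : u agrees with v on S ∧ Y u = y}`. -/
noncomputable def effProb {n : ℕ} (Y : (Fin n → Bool) → Bool) (v : Fin n → Bool)
    (S : Finset (Fin n)) (y : Bool) : ℝ :=
  ((univ.filter fun u : Fin n → Bool => (∀ i ∈ S, u i = v i) ∧ Y u = y).card : ℝ) /
    2 ^ (n - S.card)

/-- Cause ratio `ρ(v|S) = log₂(π(y | v|S) / π(y))`, where `π(y) = π(y | v|∅)`. -/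
noncomputable def causeRatio {n : ℕ} (Y : (Fin n → Bool) → Bool) (v : Fin n → Bool)
    (S : Finset (Fin n)) (y : Bool) : ℝ :=
  Real.logb 2 (effProb Y v S y / effProb Y v ∅ y)

/-- The actual-cause candidate set `x*(y)`: occurrences `v|S` maximizing the cause ratio `ρ`
over all subsets `S ⊆ {1,…,n}` and such that no proper subset attains the maximum. -/
def causeCandidates {n : ℕ} (Y : (Fin n → Bool) → Bool) (v : Fin n → Bool) (y : Bool) :
    Set (Finset (Fin n)) :=
  {S | (∀ T : Finset (Fin n), causeRatio Y v T y ≤ causeRatio Y v S y) ∧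
    ∀ T ⊂ S, causeRatio Y v T y ≠ causeRatio Y v S y}

/-!
Because `v` itself yields the outcome, every `π(y | v|S)` is positive, so `ρ` is a strictly
increasing function of `π(y | v|S) ≤ 1`, and the bound `1` is attained at `S = univ`. Hence
`x*(y)` consists of the inclusion-minimal `S` such that `v|S` forces `Y = y`. An LTU is forced
off by `v|S` exactly when `S` holds more than `n - k` zeros of `v`, and the minimal such `S`
are the sets of exactly `n - k + 1` zeros of `v`.
-/

theorem Finset.minimal_le_card_filter_iff {ι : Type*} {p : ι → Prop} [DecidablePred p] {m : ℕ}
    {S : Finset ι} : Minimal (fun T => m ≤ #{i ∈ T | p i}) S ↔ #S = m ∧ ∀ i ∈ S, p i := by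
  constructor
  · intro hS
    obtain ⟨T, hTp, hTm⟩ := exists_subset_card_eq hS.prop
    have hT : m ≤ #{i ∈ T | p i} := by
      rw [filter_true_of_mem fun i hi => (mem_filter.mp (hTp hi)).2, hTm]
    have hST : S ⊆ T := hS.2 hT (hTp.trans (filter_subset _ _))
    have hTS : T ⊆ S := hTp.trans (filter_subset _ _)
    exact ⟨hST.antisymm hTS ▸ hTm, fun i hi => (mem_filter.mp (hTp (hST hi))).2⟩
  · rintro ⟨hSm, hSp⟩
    refine ⟨show m ≤ #{i ∈ S | p i} by rw [filter_true_of_mem hSp, hSm], fun T hT hTS => ?_⟩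
    have hT : m ≤ #{i ∈ T | p i} := hT
    exact (eq_of_subset_of_card_le hTS (hSm ▸ hT.trans (card_filter_le T p))).ge

def Forces {n : ℕ} (Y : (Fin n → Bool) → Bool) (v : Fin n → Bool) (S : Finset (Fin n))
    (y : Bool) : Prop :=
  ∀ u : Fin n → Bool, (∀ i ∈ S, u i = v i) → Y u = y

section CauseRatio

variable {n : ℕ}

theorem card_filter_agree (v : Fin n → Bool) (S : Finset (Fin n)) :
    #{u : Fin n → Bool | ∀ i ∈ S, u i = v i} = 2 ^ (n - #S) := by
  have hpi : ({u | ∀ i ∈ S, u i = v i} : Finset (Fin n → Bool)) =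
      Fintype.piFinset fun i => if i ∈ S then {v i} else univ := by
    ext u
    simp only [mem_filter, mem_univ, true_and, Fintype.mem_piFinset]
    refine ⟨fun h i => ?_, fun h i hi => by simpa [hi] using h i⟩
    split_ifs with hi <;> simp [h, hi]
  rw [hpi, Fintype.card_piFinset]
  simp [apply_ite, prod_ite, filter_not, card_univ_sdiff]

theorem effProb_eq_card_div_card (Y : (Fin n → Bool) → Bool) (v : Fin n → Bool)
    (S : Finset (Fin n)) (y : Bool) :
    effProb Y v S y = (#{u ∈ {u | ∀ i ∈ S, u i = v i} | Y u = y} : ℝ) /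
      #{u : Fin n → Bool | ∀ i ∈ S, u i = v i} := by
  rw [effProb, card_filter_agree, filter_filter]
  push_cast
  rfl

variable {Y : (Fin n → Bool) → Bool} {v : Fin n → Bool} {y : Bool}

theorem effProb_le_one (S : Finset (Fin n)) : effProb Y v S y ≤ 1 := by
  rw [effProb_eq_card_div_card]
  exact div_le_one_of_le₀ (mod_cast card_filter_le _ _) (Nat.cast_nonneg _)

theorem effProb_eq_one_iff {S : Finset (Fin n)} : effProb Y v S y = 1 ↔ Forces Y v S y := by
  rw [effProb_eq_card_div_card, div_eq_one_iff_eq (by simp [card_filter_agree]), Nat.cast_inj,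
    card_filter_eq_iff]
  simp [Forces]

theorem effProb_pos (hv : Y v = y) (S : Finset (Fin n)) : 0 < effProb Y v S y := by
  rw [effProb_eq_card_div_card]
  refine div_pos (mod_cast card_pos.mpr ⟨v, ?_⟩) (by simp [card_filter_agree])
  simp [hv]

theorem forces_univ (hv : Y v = y) : Forces Y v univ y :=
  fun u hu => by rwa [show u = v from funext fun i => hu i (mem_univ i)]

theorem causeRatio_le_causeRatio_iff (hv : Y v = y) {S T : Finset (Fin n)} :
    causeRatio Y v T y ≤ causeRatio Y v S y ↔ effProb Y v T y ≤ effProb Y v S y := by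
  have h0 := effProb_pos hv ∅
  rw [causeRatio, causeRatio, Real.logb_le_logb one_lt_two (div_pos (effProb_pos hv T) h0)
    (div_pos (effProb_pos hv S) h0), div_le_div_iff_of_pos_right h0]

theorem causeRatio_eq_causeRatio_iff (hv : Y v = y) {S T : Finset (Fin n)} :
    causeRatio Y v T y = causeRatio Y v S y ↔ effProb Y v T y = effProb Y v S y := by
  simp only [le_antisymm_iff, causeRatio_le_causeRatio_iff hv]

theorem forall_causeRatio_le_iff_forces (hv : Y v = y) {S : Finset (Fin n)} :
    (∀ T, causeRatio Y v T y ≤ causeRatio Y v S y) ↔ Forces Y v S y := by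
  simp_rw [causeRatio_le_causeRatio_iff hv, ← effProb_eq_one_iff]
  refine ⟨fun h => (effProb_le_one S).antisymm ?_, fun h T => h ▸ effProb_le_one T⟩
  simpa [effProb_eq_one_iff.mpr (forces_univ hv)] using h univ

theorem causeCandidates_eq_setOf_minimal_forces (hv : Y v = y) :
    causeCandidates Y v y = {S | Minimal (Forces Y v · y) S} := by
  ext S
  simp only [causeCandidates, Set.mem_ofPred_eq, minimal_iff_forall_lt,
    forall_causeRatio_le_iff_forces hv]
  refine and_congr_right fun hS => forall₂_congr fun T _ => not_congr ?_
  rw [causeRatio_eq_causeRatio_iff hv, effProb_eq_one_iff.mpr hS, effProb_eq_one_iff]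

end CauseRatio

section LTU

variable {n : ℕ}

theorem ones_add_card_filter_false (u : Fin n → Bool) : ones u + #{i | u i = false} = n := by
  simpa [ones] using card_filter_add_card_filter_not (s := univ) (fun i => u i = true)

theorem forces_ltu_false_iff (k : ℕ) (v : Fin n → Bool) (S : Finset (Fin n)) :
    Forces (LTU k) v S false ↔ n < k + #{i ∈ S | v i = false} := by
  constructor
  · intro h
    set u : Fin n → Bool := S.piecewise v fun _ => true
    have hu : ({i | u i = false} : Finset (Fin n)) = {i ∈ S | v i = false} := by
      ext i; by_cases hi : i ∈ S <;> simp [u, hi]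
    have hoff := h u fun i hi => S.piecewise_eq_of_mem _ _ hi
    have hcount := ones_add_card_filter_false u
    rw [hu] at hcount
    simp only [LTU, decide_eq_false_iff_not, not_le] at hoff
    omega
  · intro h u hu
    have hzeros : {i ∈ S | v i = false} ⊆ ({i | u i = false} : Finset (Fin n)) := by
      intro i hi
      rw [mem_filter] at hi
      simp [hu i hi.1, hi.2]
    have hle := card_le_card hzeros
    have hcount := ones_add_card_filter_false u
    simp only [LTU, decide_eq_false_iff_not, not_le]
    omega

end LTU

theorem ltu_actual_cause_of_off_state_general (n k : ℕ) (hkn : k ≤ n)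
    (v : Fin n → Bool) (hv : ones v < k) :
    causeCandidates (LTU k) v false =
      {S : Finset (Fin n) | S.card = n - k + 1 ∧ ∀ i ∈ S, v i = false} := by
  have hoff : LTU k v = false := by simpa [LTU] using hv
  have hforces : (Forces (LTU k) v · false) = fun S => n - k + 1 ≤ #{i ∈ S | v i = false} := by
    funext S
    rw [forces_ltu_false_iff, eq_iff_iff]
    omega
  ext S
  rw [causeCandidates_eq_setOf_minimal_forces hoff, hforces]
  exact minimal_le_card_filter_iff

/-- For an LTU in the off state (`Σ v_i < k`, so `Y = 0`), the actual-cause candidate set of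
`{Y = 0}` is exactly the set of restrictions `v|S` with `|S| = n − k + 1` and all fixed inputs
in state `0`: an LTU in the off state behaves like an LTU with `0`/`1` reversed and threshold
`n − k + 1`. -/
theorem ltu_actual_cause_of_off_state (n k : ℕ) (hk1 : 1 ≤ k) (hkn : k ≤ n)
    (v : Fin n → Bool) (hv : ones v < k) :
    causeCandidates (LTU k) v false =
      {S : Finset (Fin n) | S.card = n - k + 1 ∧ ∀ i ∈ S, v i = false} :=
  ltu_actual_cause_of_off_state_general n k hkn v hv
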